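/- arXiv:0712.4253 — 2 statements merged into one kernel-verified Lean document; each statement's English description precedes it below -/
import Mathlib

section
/- Riemann addition formula for theta functions: for nonzero complex numbers t₁, t₂, t₃, z and |p| < 1, one has t₃ θ_p(t₂t₃) θ_p(t₂/t₃) θ_p(t₁z) θ_p(t₁/z) + t₁ θ_p(t₃t₁) θ_p(t₃/t₁) θ_p(t₂z) θ_p(t₂/z) + t₂ θ_p(t₁t₂) θ_p(t₁/t₂) θ_p(t₃z) θ_p(t₃/z) = 0. -/
/-!
For fixed `t ≠ 0`, the function `z ↦ θ_p(tz) θ_p(t/z)` is holomorphic on `ℂˣ` and satisfies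
`f (p z) = (p z²)⁻¹ f z`. For such `f` the functional equation gives
`∮_{|z|=1} zⁿ f = pⁿ ∮_{|z|=1} zⁿ⁻² f`, so all these moments vanish once those with `n = -1, -2`
do, and then `f = 0` on `ℂˣ` by the Cauchy formula on an annulus. Hence these functions span a
space of dimension at most two, and the left-hand side `g` of the identity, as a function of `z`,
satisfies a nontrivial relation `a g + b f₁ + c f₂ = 0` with `fᵢ(z) = θ_p(tᵢz) θ_p(tᵢ/z)`.
Evaluating at `z = t₁` and `z = t₂`, where `g` and `f₁`, resp. `g` and `f₂`, vanish, gives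
`b = c = 0` as long as `θ_p(t₁t₂) θ_p(t₁/t₂) ≠ 0`, and then `g = 0`. The `t₂` violating this
form a countable set, and the identity extends to them by continuity in `t₂`.
-/

/-- The elliptic theta function `θ_p(z) = ∏_{k≥0} (1 - z p^k)(1 - z⁻¹ p^{k+1})`. -/
noncomputable def thetaP (p z : ℂ) : ℂ :=
  ∏' k : ℕ, (1 - z * p ^ k) * (1 - z⁻¹ * p ^ (k + 1))

open Complex Metric Set Real

noncomputable def qPochhammer (p c : ℂ) : ℂ := ∏' k : ℕ, (1 - c * p ^ k)

section QPochhammer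

variable {p : ℂ}

lemma summable_norm_mul_pow (hp : ‖p‖ < 1) (c : ℂ) : Summable fun k : ℕ ↦ ‖c * p ^ k‖ := by
  simpa [norm_mul, norm_pow] using
    (summable_geometric_of_lt_one (norm_nonneg p) hp).mul_left ‖c‖

lemma multipliable_one_sub_mul_pow (hp : ‖p‖ < 1) (c : ℂ) :
    Multipliable fun k : ℕ ↦ 1 - c * p ^ k := by
  simpa [sub_eq_add_neg] using
    multipliable_one_add_of_summable (f := fun k ↦ -(c * p ^ k))
      (by simpa using summable_norm_mul_pow hp c)

lemma qPochhammer_eq_one_sub_mul (hp : ‖p‖ < 1) (c : ℂ) :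
    qPochhammer p c = (1 - c) * qPochhammer p (c * p) := by
  have hshift : ∀ k : ℕ, 1 - c * p ^ (k + 1) = 1 - c * p * p ^ k := fun k ↦ by ring
  have htail : Multipliable fun k : ℕ ↦ 1 - c * p ^ (k + 1) := by
    simpa only [hshift] using multipliable_one_sub_mul_pow hp (c * p)
  rw [qPochhammer, tprod_eq_zero_mul' (f := fun k : ℕ ↦ 1 - c * p ^ k) htail, qPochhammer,
    pow_zero, mul_one]
  simp only [hshift]

lemma qPochhammer_ne_zero (hp : ‖p‖ < 1) {c : ℂ} (hc : ∀ k : ℕ, c * p ^ k ≠ 1) :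
    qPochhammer p c ≠ 0 := by
  simpa [qPochhammer, sub_eq_add_neg] using
    tprod_one_add_ne_zero_of_summable (f := fun k ↦ -(c * p ^ k))
      (fun k h ↦ hc k (by linear_combination -h)) (by simpa using summable_norm_mul_pow hp c)

lemma differentiable_qPochhammer (hp : ‖p‖ < 1) : Differentiable ℂ (qPochhammer p) := by
  intro c
  have hprod : HasProdLocallyUniformlyOn (fun k (x : ℂ) ↦ 1 + -(x * p ^ k))
      (fun x ↦ ∏' k, (1 + -(x * p ^ k))) (ball 0 (‖c‖ + 1)) := by
    refine Summable.hasProdLocallyUniformlyOn_nat_one_add isOpen_ball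
      ((summable_geometric_of_lt_one (norm_nonneg p) hp).mul_left (‖c‖ + 1))
      (.of_forall fun k x hx ↦ ?_) (fun k ↦ by fun_prop)
    rw [norm_neg, norm_mul, norm_pow]
    gcongr
    exact (mem_ball_zero_iff.mp hx).le
  have hdiff := hprod.differentiableOn (.of_forall fun s ↦ by fun_prop) isOpen_ball
  have hq : qPochhammer p = fun x ↦ ∏' k, (1 + -(x * p ^ k)) := by
    funext x; simp [qPochhammer, sub_eq_add_neg]
  rw [hq]
  exact hdiff.differentiableAt (isOpen_ball.mem_nhds (by simp))

end QPochhammer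

section Theta

variable {p : ℂ}

lemma thetaP_eq_qPochhammer (hp : ‖p‖ < 1) (w : ℂ) :
    thetaP p w = qPochhammer p w * qPochhammer p (w⁻¹ * p) := by
  rw [thetaP, qPochhammer, qPochhammer, ← (multipliable_one_sub_mul_pow hp w).tprod_mul
    (multipliable_one_sub_mul_pow hp (w⁻¹ * p))]
  exact tprod_congr fun k ↦ by ring

lemma thetaP_mul_left (hp : ‖p‖ < 1) (hp0 : p ≠ 0) {w : ℂ} (hw : w ≠ 0) :
    thetaP p (p * w) = -w⁻¹ * thetaP p w := by
  rw [thetaP_eq_qPochhammer hp, thetaP_eq_qPochhammer hp, mul_comm p w,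
    show (w * p)⁻¹ * p = w⁻¹ by field_simp, qPochhammer_eq_one_sub_mul hp w,
    qPochhammer_eq_one_sub_mul hp w⁻¹]
  field_simp
  ring

lemma thetaP_inv (hp : ‖p‖ < 1) {w : ℂ} (hw : w ≠ 0) :
    thetaP p w⁻¹ = -w⁻¹ * thetaP p w := by
  rw [thetaP_eq_qPochhammer hp, thetaP_eq_qPochhammer hp, inv_inv,
    qPochhammer_eq_one_sub_mul hp w⁻¹, qPochhammer_eq_one_sub_mul hp w]
  field_simp
  ring

lemma thetaP_one (hp : ‖p‖ < 1) : thetaP p 1 = 0 := by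
  rw [thetaP_eq_qPochhammer hp, qPochhammer_eq_one_sub_mul hp 1, sub_self, zero_mul, zero_mul]

lemma thetaP_ne_zero (hp : ‖p‖ < 1) {w : ℂ} (hw : w ≠ 0) (hwp : ∀ m : ℤ, w ≠ p ^ m) :
    thetaP p w ≠ 0 := by
  rw [thetaP_eq_qPochhammer hp]
  refine mul_ne_zero (qPochhammer_ne_zero hp fun k hk ↦ hwp (-k) ?_)
    (qPochhammer_ne_zero hp fun k hk ↦ hwp (k + 1 : ℕ) ?_)
  · rw [zpow_neg, zpow_natCast]
    exact eq_inv_of_mul_eq_one_left hk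
  · field_simp at hk
    rw [zpow_natCast, pow_succ]
    linear_combination -hk

lemma differentiableAt_thetaP (hp : ‖p‖ < 1) {w : ℂ} (hw : w ≠ 0) :
    DifferentiableAt ℂ (thetaP p) w := by
  have h : thetaP p = fun w ↦ qPochhammer p w * qPochhammer p (w⁻¹ * p) :=
    funext (thetaP_eq_qPochhammer hp)
  rw [h]
  have := differentiable_qPochhammer hp
  fun_prop (disch := exact hw)

end Theta

section CircleIntegral

lemma circleIntegral_comp_mul_left (a : ℂ) (g : ℂ → ℂ) (r : ℝ) :
    (∮ z in C(0, r), a * g (a * z)) = ∮ z in C(0, ‖a‖ * r), g z := by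
  have hrot : ∀ θ : ℝ, a * circleMap 0 r θ = circleMap 0 (‖a‖ * r) (arg a + θ) := fun θ ↦ by
    rw [← circleMap_zero_mul, circleMap_zero ‖a‖, norm_mul_exp_arg_mul_I]
  set h : ℝ → ℂ := fun θ ↦ deriv (circleMap 0 (‖a‖ * r)) θ • g (circleMap 0 (‖a‖ * r) θ)
  have hper : Function.Periodic h (2 * π) := fun θ ↦ by
    simp only [h, deriv_circleMap, periodic_circleMap _ _ θ]
  calc (∮ z in C(0, r), a * g (a * z)) = ∫ θ in 0..2 * π, h (arg a + θ) := by
        refine intervalIntegral.integral_congr fun θ _ ↦ ?_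
        simp only [h, deriv_circleMap, smul_eq_mul, ← hrot]
        ring
    _ = ∮ z in C(0, ‖a‖ * r), g z := by
        rw [intervalIntegral.integral_comp_add_left, add_zero,
          hper.intervalIntegral_add_eq (arg a) 0, zero_add]
        rfl

lemma circleIntegral_eq_of_differentiableOn_compl_zero {g : ℂ → ℂ}
    (hg : DifferentiableOn ℂ g {0}ᶜ) {r R : ℝ} (hr : 0 < r) (hR : 0 < R) :
    (∮ z in C(0, r), g z) = ∮ z in C(0, R), g z := by
  wlog hle : r ≤ R generalizing r R
  · exact (this hR hr (le_of_not_ge hle)).symm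
  have hsub : closedBall (0 : ℂ) R \ ball 0 r ⊆ {0}ᶜ := fun z hz h0 ↦
    hz.2 (h0 ▸ mem_ball_self hr)
  refine (circleIntegral_eq_of_differentiable_on_annulus_off_countable hr hle countable_empty
    (hg.continuousOn.mono hsub) fun z hz ↦ ?_).symm
  exact hg.differentiableAt (isOpen_compl_singleton.mem_nhds
    (hsub ⟨ball_subset_closedBall hz.1.1, fun h ↦ hz.1.2 (ball_subset_closedBall h)⟩))

lemma circleIntegral_sub_inv_smul_add_circleIntegral_inv_sub_smul {f : ℂ → ℂ}
    (hf : DifferentiableOn ℂ f {0}ᶜ) {w : ℂ} {r R : ℝ} (hr : 0 < r) (hrw : r < ‖w‖)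
    (hwR : ‖w‖ < R) :
    (∮ z in C(0, R), (z - w)⁻¹ • f z) + (∮ z in C(0, r), (w - z)⁻¹ • f z) =
      (2 * π * I) • f w := by
  have hw : w ≠ 0 := norm_pos_iff.mp (hr.trans hrw)
  have hR : 0 < R := hr.trans (hrw.trans hwR)
  have hsphere : ∀ {ρ : ℝ}, 0 < ρ → ‖w‖ ≠ ρ → ∀ z ∈ sphere (0 : ℂ) ρ, z ≠ 0 ∧ z ≠ w :=
    fun hρ hwρ z hz ↦ by
      rw [mem_sphere_zero_iff_norm] at hz
      exact ⟨by rintro rfl; simp [hρ.ne] at hz, by rintro rfl; exact hwρ hz⟩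
  have hfR : ContinuousOn f (sphere 0 R) :=
    hf.continuousOn.mono fun z hz ↦ (hsphere hR hwR.ne z hz).1
  have hfr : ContinuousOn f (sphere 0 r) :=
    hf.continuousOn.mono fun z hz ↦ (hsphere hr hrw.ne' z hz).1
  have hinvR : ContinuousOn (fun z ↦ (z - w)⁻¹) (sphere 0 R) :=
    (continuousOn_id.sub continuousOn_const).inv₀ fun z hz ↦
      sub_ne_zero.mpr (hsphere hR hwR.ne z hz).2
  have hinvr : ContinuousOn (fun z ↦ (w - z)⁻¹) (sphere 0 r) :=
    (continuousOn_const.sub continuousOn_id).inv₀ fun z hz ↦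
      sub_ne_zero.mpr (hsphere hr hrw.ne' z hz).2.symm
  have hslope := circleIntegral_eq_of_differentiableOn_compl_zero
    ((Complex.differentiableOn_dslope (isOpen_compl_singleton.mem_nhds hw)).mpr hf) hr hR
  have houter : (∮ z in C(0, R), dslope f w z) =
      (∮ z in C(0, R), (z - w)⁻¹ • f z) - (2 * π * I) • f w := by
    calc (∮ z in C(0, R), dslope f w z)
        = ∮ z in C(0, R), ((z - w)⁻¹ • f z - (z - w)⁻¹ • f w) :=
          circleIntegral.integral_congr hR.le fun z hz ↦ by
            rw [dslope_of_ne _ (hsphere hR hwR.ne z hz).2, slope_def_module, smul_sub]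
      _ = (∮ z in C(0, R), (z - w)⁻¹ • f z) - (∮ z in C(0, R), (z - w)⁻¹) • f w := by
          rw [circleIntegral.integral_sub (f := fun z ↦ (z - w)⁻¹ • f z)
            (g := fun z ↦ (z - w)⁻¹ • f w) ((hinvR.smul hfR).circleIntegrable hR.le)
            ((hinvR.smul continuousOn_const).circleIntegrable hR.le),
            circleIntegral.integral_smul_const]
      _ = _ := by rw [circleIntegral.integral_sub_inv_of_mem_ball (by simpa using hwR)]
  have hinner : (∮ z in C(0, r), dslope f w z) = -∮ z in C(0, r), (w - z)⁻¹ • f z := by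
    have hzero : (∮ z in C(0, r), (w - z)⁻¹) = 0 := by
      refine DiffContOnCl.circleIntegral_eq_zero hr.le (DifferentiableOn.diffContOnCl ?_)
      rw [closure_ball _ hr.ne']
      intro z hz
      refine DifferentiableAt.differentiableWithinAt <| DifferentiableAt.inv (by fun_prop)
        (sub_ne_zero.mpr fun h ↦ hrw.not_ge ?_)
      rwa [mem_closedBall_zero_iff, ← h] at hz
    calc (∮ z in C(0, r), dslope f w z)
        = ∮ z in C(0, r), ((w - z)⁻¹ • f w - (w - z)⁻¹ • f z) :=
          circleIntegral.integral_congr hr.le fun z hz ↦ by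
            rw [dslope_of_ne _ (hsphere hr hrw.ne' z hz).2, slope_def_module, ← neg_sub w z,
              inv_neg, neg_smul, smul_sub]
            abel
      _ = (∮ z in C(0, r), (w - z)⁻¹) • f w - ∮ z in C(0, r), (w - z)⁻¹ • f z := by
          rw [circleIntegral.integral_sub (f := fun z ↦ (w - z)⁻¹ • f w)
            (g := fun z ↦ (w - z)⁻¹ • f z) ((hinvr.smul continuousOn_const).circleIntegrable hr.le)
            ((hinvr.smul hfr).circleIntegrable hr.le), circleIntegral.integral_smul_const]
      _ = _ := by rw [hzero, zero_smul, zero_sub]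
  rw [hinner, houter] at hslope
  linear_combination -hslope

lemma hasSum_circleIntegral_inv_sub_smul {f : ℂ → ℂ} {R : ℝ} {w : ℂ}
    (hf : CircleIntegrable f 0 R) (hR : 0 ≤ R) (hw : R < ‖w‖) :
    HasSum (fun n : ℕ ↦ ∮ z in C(0, R), (z / w) ^ n • w⁻¹ • f z)
      (∮ z in C(0, R), (w - z)⁻¹ • f z) := by
  have hw0 : 0 < ‖w‖ := hR.trans_lt hw
  have hq : R / ‖w‖ ∈ Ico (0 : ℝ) 1 := ⟨by positivity, (div_lt_one hw0).2 hw⟩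
  refine intervalIntegral.hasSum_integral_of_dominated_convergence
      (fun n θ ↦ ‖f (circleMap 0 R θ)‖ * (R / ‖w‖ * (R / ‖w‖) ^ n)) (fun n ↦ ?_) (fun n ↦ ?_)
      ?_ ?_ ?_
  · simp only [deriv_circleMap]
    have hz : Continuous (circleMap 0 R) := continuous_circleMap 0 R
    exact ((hz.mul continuous_const).aestronglyMeasurable).smul
      (((hz.div_const w).pow n).aestronglyMeasurable.smul
        (hf.def'.1.const_smul w⁻¹))
  · refine .of_forall fun θ _ ↦ le_of_eq ?_
    simp [abs_of_nonneg hR, div_pow]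
    ring
  · exact .of_forall fun _ _ ↦ ((summable_geometric_of_lt_one hq.1 hq.2).mul_left _).mul_left _
  · simpa only [tsum_mul_left, tsum_geometric_of_lt_one hq.1 hq.2] using
      hf.norm.mul_continuousOn continuousOn_const
  · refine .of_forall fun θ _ ↦ HasSum.const_smul _ ?_
    have hlt : ‖circleMap 0 R θ / w‖ < 1 := by simpa [norm_div, abs_of_nonneg hR] using hq.2
    convert! ((hasSum_geometric_of_norm_lt_one hlt).mul_right (w⁻¹ * f (circleMap 0 R θ))) using 1
    dsimp only
    rw [smul_eq_mul, ← mul_assoc, ← mul_inv, sub_mul, one_mul,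
        div_mul_cancel₀ _ (norm_pos_iff.mp hw0)]

end CircleIntegral

/-- `2πi` times the coefficient of `z^(-n-1)` in the Laurent expansion of `f` on `ℂˣ`. -/
noncomputable def circleMoment (f : ℂ → ℂ) (n : ℤ) : ℂ := ∮ z in C(0, 1), z ^ n * f z

section CircleMoment

variable {f g : ℂ → ℂ}

lemma DifferentiableOn.zpow_mul_compl_zero (hf : DifferentiableOn ℂ f {0}ᶜ) (n : ℤ) :
    DifferentiableOn ℂ (fun z ↦ z ^ n * f z) {0}ᶜ :=
  fun z hz ↦ ((differentiableAt_zpow.mpr (Or.inl hz)).differentiableWithinAt).mul (hf z hz)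

lemma circleMoment_eq_circleIntegral (hf : DifferentiableOn ℂ f {0}ᶜ) (n : ℤ) {R : ℝ}
    (hR : 0 < R) : circleMoment f n = ∮ z in C(0, R), z ^ n * f z :=
  circleIntegral_eq_of_differentiableOn_compl_zero (hf.zpow_mul_compl_zero n) one_pos hR

lemma DifferentiableOn.circleIntegrable_compl_zero (hf : DifferentiableOn ℂ f {0}ᶜ) {R : ℝ}
    (hR : 0 < R) : CircleIntegrable f 0 R :=
  (hf.continuousOn.mono fun z hz ↦ ne_zero_of_mem_sphere hR.ne' ⟨z, hz⟩).circleIntegrable hR.le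

lemma circleMoment_add (hf : DifferentiableOn ℂ f {0}ᶜ) (hg : DifferentiableOn ℂ g {0}ᶜ)
    (n : ℤ) : circleMoment (f + g) n = circleMoment f n + circleMoment g n := by
  simp only [circleMoment, Pi.add_apply, mul_add]
  exact circleIntegral.integral_add ((hf.zpow_mul_compl_zero n).circleIntegrable_compl_zero one_pos)
    ((hg.zpow_mul_compl_zero n).circleIntegrable_compl_zero one_pos)

lemma circleMoment_smul (c : ℂ) (n : ℤ) : circleMoment (c • f) n = c * circleMoment f n := by
  simp only [circleMoment, Pi.smul_apply, smul_eq_mul, mul_left_comm _ c,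
    circleIntegral.integral_const_mul]

lemma eqOn_zero_of_circleMoment_eq_zero (hf : DifferentiableOn ℂ f {0}ᶜ)
    (hmom : ∀ n, circleMoment f n = 0) : EqOn f 0 {0}ᶜ := by
  intro w hw
  have hw0 : 0 < ‖w‖ := norm_pos_iff.mpr hw
  have hmomR : ∀ {R : ℝ}, 0 < R → ∀ n : ℤ, (∮ z in C(0, R), z ^ n * f z) = 0 := fun hR n ↦ by
    rw [← circleMoment_eq_circleIntegral hf n hR, hmom]
  have houter : (∮ z in C(0, 2 * ‖w‖), (z - w)⁻¹ • f z) = 0 := by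
    have hsum := hasSum_two_pi_I_cauchyPowerSeries_integral (c := 0) (w := w)
      (hf.circleIntegrable_compl_zero (by positivity : 0 < 2 * ‖w‖)) (by linarith)
    have hterm : ∀ (n : ℕ) (z : ℂ), (w / (z - 0)) ^ n • (z - 0)⁻¹ • f z =
        w ^ n * (z ^ (-(n + 1 : ℕ) : ℤ) * f z) := fun n z ↦ by
      rw [sub_zero, zpow_neg, zpow_natCast, smul_eq_mul, smul_eq_mul, div_pow, pow_succ, mul_inv]
      ring
    simp only [hterm, circleIntegral.integral_const_mul, hmomR (by positivity : 0 < 2 * ‖w‖),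
      mul_zero, zero_add] at hsum
    exact hsum.unique hasSum_zero
  have hinner : (∮ z in C(0, ‖w‖ / 2), (w - z)⁻¹ • f z) = 0 := by
    have hsum := hasSum_circleIntegral_inv_sub_smul (hf.circleIntegrable_compl_zero (half_pos hw0))
      (half_pos hw0).le (by linarith : ‖w‖ / 2 < ‖w‖)
    have hterm : ∀ (n : ℕ) (z : ℂ), (z / w) ^ n • w⁻¹ • f z =
        (w ^ (n + 1))⁻¹ * (z ^ (n : ℤ) * f z) := fun n z ↦ by
      rw [zpow_natCast, smul_eq_mul, smul_eq_mul, div_pow, pow_succ, mul_inv]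
      ring
    simp only [hterm, circleIntegral.integral_const_mul, hmomR (half_pos hw0), mul_zero] at hsum
    exact hsum.unique hasSum_zero
  have := circleIntegral_sub_inv_smul_add_circleIntegral_inv_sub_smul hf (half_pos hw0)
    (by linarith) (by linarith : ‖w‖ < 2 * ‖w‖)
  rw [houter, hinner, add_zero, eq_comm, smul_eq_zero] at this
  exact this.resolve_left two_pi_I_ne_zero

end CircleMoment

/-- Theta functions of degree two. Their value at `0` is unconstrained, so statements about them
are `EqOn _ _ {0}ᶜ`. -/
def thetaSpace (p : ℂ) : Submodule ℂ (ℂ → ℂ) where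
  carrier := {f | DifferentiableOn ℂ f {0}ᶜ ∧ ∀ z ≠ 0, f (p * z) = (p * z ^ 2)⁻¹ * f z}
  add_mem' hf hg := ⟨hf.1.add hg.1, fun z hz ↦ by simp [hf.2 z hz, hg.2 z hz, mul_add]⟩
  zero_mem' := ⟨differentiableOn_const 0, fun _ _ ↦ by simp⟩
  smul_mem' c _ hf := ⟨hf.1.const_smul c, fun z hz ↦ by simp [hf.2 z hz, mul_left_comm]⟩

section ThetaSpace

variable {p : ℂ} {f : ℂ → ℂ}

lemma circleMoment_eq_mul_circleMoment_sub_two (hp0 : p ≠ 0) (hf : f ∈ thetaSpace p) (n : ℤ) :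
    circleMoment f n = p ^ n * circleMoment f (n - 2) := by
  rw [circleMoment_eq_circleIntegral hf.1 n (by simpa using hp0 : 0 < ‖p‖ * 1),
    ← circleIntegral_comp_mul_left, circleMoment, ← circleIntegral.integral_const_mul]
  refine circleIntegral.integral_congr zero_le_one fun z hz ↦ ?_
  have hz0 : z ≠ 0 := ne_zero_of_mem_unit_sphere ⟨z, hz⟩
  rw [hf.2 z hz0, mul_zpow, zpow_sub₀ hz0, zpow_two]
  field_simp

lemma circleMoment_eq_zero_of_mem_thetaSpace (hp0 : p ≠ 0) (hf : f ∈ thetaSpace p)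
    (h₁ : circleMoment f (-1) = 0) (h₂ : circleMoment f (-2) = 0) (n : ℤ) :
    circleMoment f n = 0 := by
  have hiff : ∀ n, circleMoment f n = 0 ↔ circleMoment f (n - 2) = 0 := fun n ↦ by
    rw [circleMoment_eq_mul_circleMoment_sub_two hp0 hf, mul_eq_zero,
      or_iff_right (zpow_ne_zero _ hp0)]
  have hshift : ∀ m k : ℤ, circleMoment f m = 0 → circleMoment f (m + 2 * k) = 0 := by
    intro m k hm
    induction k using Int.induction_on with
    | zero => simpa using hm
    | succ k ih => rwa [hiff, show m + 2 * (k + 1) - 2 = m + 2 * k by ring]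
    | pred k ih => rwa [hiff, show m + 2 * -k - 2 = m + 2 * (-k - 1) by ring] at ih
  rcases Int.even_or_odd' n with ⟨k, rfl | rfl⟩
  · convert hshift (-2) (k + 1) h₂ using 2; ring
  · convert hshift (-1) (k + 1) h₁ using 2; ring

noncomputable def thetaMoments (p : ℂ) : thetaSpace p →ₗ[ℂ] Fin 2 → ℂ where
  toFun f := ![circleMoment f (-1), circleMoment f (-2)]
  map_add' f g := by
    simp only [Submodule.coe_add, circleMoment_add f.2.1 g.2.1]
    ext i; fin_cases i <;> rfl
  map_smul' c f := by
    simp only [Submodule.coe_smul, circleMoment_smul, RingHom.id_apply]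
    ext i; fin_cases i <;> rfl

lemma eqOn_zero_of_thetaMoments_eq_zero (hp0 : p ≠ 0) (f : thetaSpace p)
    (hf : thetaMoments p f = 0) : EqOn (f : ℂ → ℂ) 0 {0}ᶜ := by
  have h₁ : circleMoment f (-1) = 0 := congr_fun hf 0
  have h₂ : circleMoment f (-2) = 0 := congr_fun hf 1
  exact eqOn_zero_of_circleMoment_eq_zero f.2.1
    (circleMoment_eq_zero_of_mem_thetaSpace hp0 f.2 h₁ h₂)

lemma exists_ne_zero_sum_smul_eqOn_zero (hp0 : p ≠ 0) (f : Fin 3 → thetaSpace p) :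
    ∃ c : Fin 3 → ℂ, c ≠ 0 ∧ EqOn (∑ i, c i • (f i : ℂ → ℂ)) 0 {0}ᶜ := by
  have hdep : ¬LinearIndependent ℂ (thetaMoments p ∘ f) := fun h ↦ by
    simpa using h.fintype_card_le_finrank
  obtain ⟨c, hc, i, hi⟩ := Fintype.not_linearIndependent_iff.mp hdep
  refine ⟨c, fun h ↦ hi (congr_fun h i), ?_⟩
  have := eqOn_zero_of_thetaMoments_eq_zero hp0 (∑ i, c i • f i) (by simpa [map_sum] using hc)
  simpa [Submodule.coe_sum] using this

lemma eqOn_zero_of_mem_thetaSpace_of_apply_eq_zero (hp0 : p ≠ 0) {g f₁ f₂ : ℂ → ℂ}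
    (hg : g ∈ thetaSpace p) (hf₁ : f₁ ∈ thetaSpace p) (hf₂ : f₂ ∈ thetaSpace p) {t₁ t₂ : ℂ}
    (ht₁ : t₁ ≠ 0) (ht₂ : t₂ ≠ 0) (hgt₁ : g t₁ = 0) (hgt₂ : g t₂ = 0) (hf₁t₁ : f₁ t₁ = 0)
    (hf₂t₂ : f₂ t₂ = 0) (hf₁t₂ : f₁ t₂ ≠ 0) (hf₂t₁ : f₂ t₁ ≠ 0) : EqOn g 0 {0}ᶜ := by
  obtain ⟨c, hc, hrel⟩ := exists_ne_zero_sum_smul_eqOn_zero hp0 ![⟨g, hg⟩, ⟨f₁, hf₁⟩, ⟨f₂, hf₂⟩]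
  have hrel' : ∀ z ≠ 0, c 0 * g z + c 1 * f₁ z + c 2 * f₂ z = 0 := fun z hz ↦ by
    simpa [Fin.sum_univ_three] using hrel hz
  have hc₂ : c 2 = 0 := by
    simpa [hgt₁, hf₁t₁, hf₂t₁] using hrel' t₁ ht₁
  have hc₁ : c 1 = 0 := by
    simpa [hgt₂, hf₂t₂, hf₁t₂] using hrel' t₂ ht₂
  have hc₀ : c 0 ≠ 0 := fun h ↦ hc (by ext i; fin_cases i <;> assumption)
  intro z hz
  simpa [hc₁, hc₂, hc₀] using hrel' z hz

end ThetaSpace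

section Addition

variable {p : ℂ}

lemma thetaP_div (hp : ‖p‖ < 1) {a b : ℂ} (ha : a ≠ 0) (hb : b ≠ 0) :
    thetaP p (a / b) = -(a / b) * thetaP p (b / a) := by
  rw [← inv_div b a, thetaP_inv hp (div_ne_zero hb ha), inv_div]

lemma countable_setOf_thetaP_eq_zero (hp : ‖p‖ < 1) : {w | thetaP p w = 0}.Countable := by
  refine ((countable_singleton 0).union (countable_range fun m : ℤ ↦ p ^ m)).mono fun w hw ↦ ?_
  by_contra h
  simp only [mem_union, mem_singleton_iff, mem_range, not_or, not_exists] at h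
  exact thetaP_ne_zero hp h.1 (fun m hm ↦ h.2 m hm.symm) hw

lemma thetaP_mul_thetaP_div_mem_thetaSpace (hp : ‖p‖ < 1) (hp0 : p ≠ 0) {t : ℂ} (ht : t ≠ 0) :
    (fun z ↦ thetaP p (t * z) * thetaP p (t / z)) ∈ thetaSpace p := by
  refine ⟨fun z hz ↦ ?_, fun z hz ↦ ?_⟩
  · have hz : z ≠ 0 := hz
    refine DifferentiableAt.differentiableWithinAt (.mul ?_ ?_)
    · exact (differentiableAt_thetaP hp (mul_ne_zero ht hz)).comp z (by fun_prop)
    · exact (differentiableAt_thetaP hp (div_ne_zero ht hz)).comp z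
        ((differentiableAt_const t).div differentiableAt_id hz)
  · have h := thetaP_mul_left hp hp0 (div_ne_zero ht (mul_ne_zero hp0 hz))
    rw [show p * (t / (p * z)) = t / z by field_simp] at h
    dsimp only
    rw [show t * (p * z) = p * (t * z) by ring, thetaP_mul_left hp hp0 (mul_ne_zero ht hz), h]
    field_simp

lemma dense_setOf_thetaP_mul_div_ne_zero (hp : ‖p‖ < 1) {t : ℂ} (ht : t ≠ 0) :
    Dense {u | u ≠ 0 ∧ thetaP p (t * u) ≠ 0 ∧ thetaP p (t / u) ≠ 0} := by
  have hZ := countable_setOf_thetaP_eq_zero hp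
  refine ((((countable_singleton 0).union (hZ.preimage (mul_right_injective₀ ht))).union
    (hZ.preimage ((mul_right_injective₀ ht).comp inv_injective))).dense_compl ℂ).mono
    fun u hu ↦ ?_
  simpa [not_or, div_eq_mul_inv, and_assoc] using hu

lemma ContinuousAt.thetaP (hp : ‖p‖ < 1) {g : ℂ → ℂ} {x : ℂ} (hg : ContinuousAt g x)
    (hgx : g x ≠ 0) : ContinuousAt (fun u ↦ thetaP p (g u)) x :=
  (differentiableAt_thetaP hp hgx).continuousAt.comp hg

lemma theta_addition_of_thetaP_ne_zero (hp : ‖p‖ < 1) (hp0 : p ≠ 0) {t₁ t₂ t₃ z : ℂ}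
    (h1 : t₁ ≠ 0) (h2 : t₂ ≠ 0) (h3 : t₃ ≠ 0) (hz : z ≠ 0)
    (hmul : thetaP p (t₁ * t₂) ≠ 0) (hdiv : thetaP p (t₁ / t₂) ≠ 0) :
    t₃ * (thetaP p (t₂ * t₃) * thetaP p (t₂ / t₃)) *
        (thetaP p (t₁ * z) * thetaP p (t₁ / z)) +
      t₁ * (thetaP p (t₃ * t₁) * thetaP p (t₃ / t₁)) *
        (thetaP p (t₂ * z) * thetaP p (t₂ / z)) +
      t₂ * (thetaP p (t₁ * t₂) * thetaP p (t₁ / t₂)) *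
        (thetaP p (t₃ * z) * thetaP p (t₃ / z)) = 0 := by
  set F : ℂ → ℂ → ℂ := fun t z ↦ thetaP p (t * z) * thetaP p (t / z) with hF
  have hFmem : ∀ {t}, t ≠ 0 → F t ∈ thetaSpace p := thetaP_mul_thetaP_div_mem_thetaSpace hp hp0
  have hFself : ∀ {t}, t ≠ 0 → F t t = 0 := fun ht ↦ by
    simp only [hF, div_self ht, thetaP_one hp, mul_zero]
  have hF₂₁ : F t₂ t₁ = -(t₂ / t₁) * F t₁ t₂ := by
    simp only [hF, mul_comm t₂ t₁, thetaP_div hp h2 h1]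
    ring
  have hF₂₃ : thetaP p (t₂ / t₃) = -(t₂ / t₃) * thetaP p (t₃ / t₂) := thetaP_div hp h2 h3
  set g : ℂ → ℂ := (t₃ * (thetaP p (t₂ * t₃) * thetaP p (t₂ / t₃))) • F t₁ +
    (t₁ * (thetaP p (t₃ * t₁) * thetaP p (t₃ / t₁))) • F t₂ +
    (t₂ * (thetaP p (t₁ * t₂) * thetaP p (t₁ / t₂))) • F t₃ with hg
  have hgmem : g ∈ thetaSpace p := add_mem (add_mem (Submodule.smul_mem _ _ (hFmem h1))
    (Submodule.smul_mem _ _ (hFmem h2))) (Submodule.smul_mem _ _ (hFmem h3))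
  have hgt₁ : g t₁ = 0 := by
    simp only [hg, Pi.add_apply, Pi.smul_apply, smul_eq_mul, hFself h1, hF₂₁]
    simp only [hF, mul_comm t₃ t₁]
    field_simp
    ring
  have hgt₂ : g t₂ = 0 := by
    simp only [hg, Pi.add_apply, Pi.smul_apply, smul_eq_mul, hFself h2, hF₂₃]
    simp only [hF, mul_comm t₃ t₂]
    field_simp
    ring
  have hF₁₂ : F t₁ t₂ ≠ 0 := mul_ne_zero hmul hdiv
  have hF₂₁' : F t₂ t₁ ≠ 0 := by
    rw [hF₂₁]
    exact mul_ne_zero (neg_ne_zero.mpr (div_ne_zero h2 h1)) hF₁₂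
  simpa [hg] using eqOn_zero_of_mem_thetaSpace_of_apply_eq_zero hp0 hgmem (hFmem h1) (hFmem h2)
    h1 h2 hgt₁ hgt₂ (hFself h1) (hFself h2) hF₁₂ hF₂₁' hz

end Addition

/-- Riemann addition formula for theta functions:
`t₃ θ_p(t₂t₃^{±1}) θ_p(t₁z^{±1}) + t₁ θ_p(t₃t₁^{±1}) θ_p(t₂z^{±1})
  + t₂ θ_p(t₁t₂^{±1}) θ_p(t₃z^{±1}) = 0`. -/
theorem theta_addition (p t₁ t₂ t₃ z : ℂ) (hp0 : p ≠ 0) (hp : ‖p‖ < 1)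
    (h1 : t₁ ≠ 0) (h2 : t₂ ≠ 0) (h3 : t₃ ≠ 0) (hz : z ≠ 0) :
    t₃ * (thetaP p (t₂ * t₃) * thetaP p (t₂ / t₃)) *
        (thetaP p (t₁ * z) * thetaP p (t₁ / z)) +
      t₁ * (thetaP p (t₃ * t₁) * thetaP p (t₃ / t₁)) *
        (thetaP p (t₂ * z) * thetaP p (t₂ / z)) +
      t₂ * (thetaP p (t₁ * t₂) * thetaP p (t₁ / t₂)) *
        (thetaP p (t₃ * z) * thetaP p (t₃ / z)) = 0 := by
  set Φ : ℂ → ℂ := fun u ↦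
    t₃ * (thetaP p (u * t₃) * thetaP p (u / t₃)) * (thetaP p (t₁ * z) * thetaP p (t₁ / z)) +
    t₁ * (thetaP p (t₃ * t₁) * thetaP p (t₃ / t₁)) * (thetaP p (u * z) * thetaP p (u / z)) +
    u * (thetaP p (t₁ * u) * thetaP p (t₁ / u)) * (thetaP p (t₃ * z) * thetaP p (t₃ / z))
  have hΦ : ContinuousAt Φ t₂ := by
    have := (continuousAt_id.mul_const t₃).thetaP hp (mul_ne_zero h2 h3)
    have := (continuousAt_id.div_const t₃).thetaP hp (div_ne_zero h2 h3)
    have := (continuousAt_id.mul_const z).thetaP hp (mul_ne_zero h2 hz)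
    have := (continuousAt_id.div_const z).thetaP hp (div_ne_zero h2 hz)
    have := (continuousAt_id.const_mul t₁).thetaP hp (mul_ne_zero h1 h2)
    have := (continuousAt_const.div continuousAt_id h2).thetaP hp (div_ne_zero h1 h2)
    fun_prop
  have hΦS : MapsTo Φ {u | u ≠ 0 ∧ thetaP p (t₁ * u) ≠ 0 ∧ thetaP p (t₁ / u) ≠ 0} {0} :=
    fun u ⟨hu, hmul, hdiv⟩ ↦ theta_addition_of_thetaP_ne_zero hp hp0 h1 hu h3 hz hmul hdiv
  simpa [Φ] using
    hΦ.continuousWithinAt.mem_closure (dense_setOf_thetaP_mul_div_ne_zero hp h1 t₂) hΦS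
end

section
/- Heine (Andréief) identity: for measurable functions φ₁,…,φ_n and ψ₁,…,ψ_n on a measure space (X, μ) such that all products φ_i ψ_j are integrable, (1/n!) ∫_{X^n} det_{1≤i,j≤n}(φ_i(z_j)) · det_{1≤i,j≤n}(ψ_i(z_j)) dμ(z₁)⋯dμ(z_n) = det_{1≤i,j≤n} ( ∫_X φ_i(z) ψ_j(z) dμ(z) ). -/
/-!
Expand both determinants over permutations and integrate term by term: by Fubini the term
indexed by `(σ, τ)` factorizes as `sign σ * sign τ * ∏ j, M (σ j) (τ j)` with
`M i j = ∫ φ i * ψ j`. For fixed `σ` the sum over `τ` is `sign σ * det M`, so each of the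
`n!` permutations `σ` contributes exactly `det M`.
-/

open MeasureTheory Finset Equiv

namespace Matrix

variable {n R : Type*} [Fintype n] [DecidableEq n] [CommRing R]

theorem det_mul_det_eq_sum_perm_sum_perm (A B : Matrix n n R) :
    A.det * B.det = ∑ σ : Perm n, ∑ τ : Perm n,
      ((Perm.sign σ : ℤ) : R) * (Perm.sign τ : ℤ) * ∏ j, A (σ j) j * B (τ j) j := by
  rw [det_apply', det_apply', sum_mul_sum]
  refine sum_congr rfl fun σ _ => sum_congr rfl fun τ _ => ?_
  rw [prod_mul_distrib]
  ring

theorem sum_perm_sign_mul_prod_apply_perm (M : Matrix n n R) (σ : Perm n) :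
    ∑ τ : Perm n, ((Perm.sign τ : ℤ) : R) * ∏ j, M (σ j) (τ j) =
      Perm.sign σ * M.det := by
  rw [← det_permute, ← det_transpose, det_apply']
  rfl

theorem sum_perm_sum_perm_sign_mul_prod_apply_perm (M : Matrix n n R) :
    ∑ σ : Perm n, ∑ τ : Perm n,
        ((Perm.sign σ : ℤ) : R) * (Perm.sign τ : ℤ) * ∏ j, M (σ j) (τ j) =
      (Fintype.card n).factorial * M.det := by
  have sign_mul_self (σ : Perm n) : ((Perm.sign σ : ℤ) : R) * (Perm.sign σ : ℤ) = 1 := by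
    rw [← Int.cast_mul, ← Units.val_mul, Int.units_mul_self, Units.val_one, Int.cast_one]
  simp_rw [mul_assoc, ← mul_sum, sum_perm_sign_mul_prod_apply_perm, ← mul_assoc, sign_mul_self,
    one_mul, sum_const, card_univ, Fintype.card_perm, nsmul_eq_mul]

end Matrix

theorem integral_det_mul_det {X ι 𝕜 : Type*} [Fintype ι] [DecidableEq ι] [RCLike 𝕜]
    [MeasurableSpace X] (μ : Measure X) [SigmaFinite μ] (φ ψ : ι → X → 𝕜)
    (hint : ∀ i j, Integrable (fun x => φ i x * ψ j x) μ) :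
    ∫ w : ι → X, (Matrix.of fun i j => φ i (w j)).det * (Matrix.of fun i j => ψ i (w j)).det
        ∂(Measure.pi fun _ => μ) =
      (Fintype.card ι).factorial * (Matrix.of fun i j => ∫ x, φ i x * ψ j x ∂μ).det := by
  have integrable_prod (σ τ : Perm ι) : Integrable
      (fun w : ι → X => ∏ j, φ (σ j) (w j) * ψ (τ j) (w j)) (Measure.pi fun _ => μ) :=
    Integrable.fintype_prod fun j => hint (σ j) (τ j)
  calc
    _ = ∑ σ : Perm ι, ∑ τ : Perm ι, ((Perm.sign σ : ℤ) : 𝕜) * (Perm.sign τ : ℤ) *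
          ∏ j, ∫ x, φ (σ j) x * ψ (τ j) x ∂μ := by
      simp_rw [Matrix.det_mul_det_eq_sum_perm_sum_perm, Matrix.of_apply]
      rw [integral_finsetSum _ fun σ _ =>
        integrable_finsetSum _ fun τ _ => (integrable_prod σ τ).const_mul _]
      refine sum_congr rfl fun σ _ => ?_
      rw [integral_finsetSum _ fun τ _ => (integrable_prod σ τ).const_mul _]
      refine sum_congr rfl fun τ _ => ?_
      rw [integral_const_mul, integral_fintype_prod_eq_prod (fun j x => φ (σ j) x * ψ (τ j) x)]
    _ = _ :=
      Matrix.sum_perm_sum_perm_sign_mul_prod_apply_perm (.of fun i j => ∫ x, φ i x * ψ j x ∂μ)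

theorem heine_identity_general {X : Type*} [MeasurableSpace X] (μ : Measure X) [SigmaFinite μ]
    (n : ℕ) (φ ψ : Fin n → X → ℂ)
    (hint : ∀ i j, Integrable (fun x => φ i x * ψ j x) μ) :
    ((Nat.factorial n : ℂ))⁻¹ *
        ∫ w : Fin n → X,
          (Matrix.det (Matrix.of fun i j => φ i (w j))) *
            (Matrix.det (Matrix.of fun i j => ψ i (w j)))
          ∂(Measure.pi fun _ : Fin n => μ) =
      Matrix.det (Matrix.of fun i j => ∫ x, φ i x * ψ j x ∂μ) := by
  rw [integral_det_mul_det μ φ ψ hint, Fintype.card_fin,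
    inv_mul_cancel_left₀ (Nat.cast_ne_zero.mpr n.factorial_ne_zero)]

/-- The Heine (Andréief) identity. -/
theorem heine_identity {X : Type*} [MeasurableSpace X] (μ : Measure X) [SigmaFinite μ]
    (n : ℕ) (φ ψ : Fin n → X → ℂ)
    (hφ : ∀ i, Measurable (φ i)) (hψ : ∀ i, Measurable (ψ i))
    (hint : ∀ i j, Integrable (fun x => φ i x * ψ j x) μ) :
    ((Nat.factorial n : ℂ))⁻¹ *
        ∫ w : Fin n → X,
          (Matrix.det (Matrix.of fun i j => φ i (w j))) *
            (Matrix.det (Matrix.of fun i j => ψ i (w j)))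
          ∂(Measure.pi fun _ : Fin n => μ) =
      Matrix.det (Matrix.of fun i j => ∫ x, φ i x * ψ j x ∂μ) :=
  heine_identity_general μ n φ ψ hint
end
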